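/- Let h ∈ (0, 2π/3), k ≥ 0, α ≥ 0, β ∈ ℝ and θ ≥ 0. Then at φ = π the third Routh–Hurwitz stability inequality holds: A − C = (w2 − 2w1) − (a2 − 2a1) ≥ 0. -/

import Mathlib

/-! With `c = cos (h / 2)`, both differences `a2 - 2 a1` and `2 a5 - a6` have closed forms with
the factor `2c - 1` in the numerator and `4c² - 1 > 0` in the denominator, so they are
nonnegative since `c > 1/2` for `h < 2π/3`. The quantity `A - C` is a combination of these two
differences with the nonnegative weights `2αk + k²θβ²` and `k²θ`. -/

open Real

namespace Real

theorem cos_eq_two_mul_cos_half_sq_sub_one (h : ℝ) : cos h = 2 * cos (h / 2) ^ 2 - 1 := by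
  rw [cos_sq, show 2 * (h / 2) = h by ring]
  ring

theorem sin_eq_two_mul_sin_half_mul_cos_half (h : ℝ) : sin h = 2 * sin (h / 2) * cos (h / 2) := by
  rw [← sin_two_mul, show 2 * (h / 2) = h by ring]

theorem sin_three_mul_half (h : ℝ) :
    sin (3 * h / 2) = sin (h / 2) * (4 * cos (h / 2) ^ 2 - 1) := by
  rw [show 3 * h / 2 = 3 * (h / 2) by ring, sin_three_mul, cos_sq']
  ring

theorem cos_three_mul_half (h : ℝ) :
    cos (3 * h / 2) = cos (h / 2) * (4 * cos (h / 2) ^ 2 - 3) := by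
  rw [show 3 * h / 2 = 3 * (h / 2) by ring, cos_three_mul]
  ring

end Real

section StencilCoefficients

variable {h : ℝ}

theorem stencil_sub_eq (hs : sin (h / 2) ≠ 0) (hc : cos (h / 2) ≠ 0) :
    2 / (1 + 2 * cos h) - 2 * (sin (h / 2) ^ 2 / (sin h * sin (3 * h / 2))) =
      (2 * cos (h / 2) - 1) / (cos (h / 2) * (4 * cos (h / 2) ^ 2 - 1)) := by
  rw [cos_eq_two_mul_cos_half_sq_sub_one h, sin_eq_two_mul_sin_half_mul_cos_half h,
    sin_three_mul_half, show 1 + 2 * (2 * cos (h / 2) ^ 2 - 1) = 4 * cos (h / 2) ^ 2 - 1 by ring]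
  field_simp

theorem correction_sub_eq (hs : sin (h / 2) ≠ 0) (hc : cos (h / 2) ≠ 0) :
    2 * (3 * (1 + 3 * cos h) / (16 * sin (h / 2) ^ 2 * (2 * cos (h / 2) + cos (3 * h / 2)))) -
        -(3 * cos (h / 2) ^ 2) / (2 * sin (h / 2) ^ 2 * (1 + 2 * cos h)) =
      3 * (cos (h / 2) + 1) ^ 2 * (2 * cos (h / 2) - 1) /
        (4 * cos (h / 2) * sin (h / 2) ^ 2 * (4 * cos (h / 2) ^ 2 - 1)) := by
  rw [cos_eq_two_mul_cos_half_sq_sub_one h, cos_three_mul_half,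
    show 2 * cos (h / 2) + cos (h / 2) * (4 * cos (h / 2) ^ 2 - 3) =
      cos (h / 2) * (4 * cos (h / 2) ^ 2 - 1) by ring,
    show 1 + 2 * (2 * cos (h / 2) ^ 2 - 1) = 4 * cos (h / 2) ^ 2 - 1 by ring]
  field_simp
  ring

variable (hh0 : 0 < h) (hh1 : h < 2 * π / 3)
include hh0 hh1

theorem sin_half_pos_of_lt_two_pi_div_three : 0 < sin (h / 2) :=
  sin_pos_of_pos_of_lt_pi (by linarith) (by linarith [pi_pos])

theorem one_half_lt_cos_half_of_lt_two_pi_div_three : 1 / 2 < cos (h / 2) := by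
  rw [← cos_pi_div_three]
  exact cos_lt_cos_of_nonneg_of_le_pi (by linarith) (by linarith [pi_pos]) (by linarith)

theorem stencil_sub_nonneg :
    0 ≤ 2 / (1 + 2 * cos h) - 2 * (sin (h / 2) ^ 2 / (sin h * sin (3 * h / 2))) := by
  have hs := sin_half_pos_of_lt_two_pi_div_three hh0 hh1
  have hc := one_half_lt_cos_half_of_lt_two_pi_div_three hh0 hh1
  have hD : 0 < 4 * cos (h / 2) ^ 2 - 1 := by nlinarith
  rw [stencil_sub_eq hs.ne' (by positivity)]
  exact div_nonneg (by linarith) (by positivity)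

theorem correction_sub_nonneg :
    0 ≤ 2 * (3 * (1 + 3 * cos h) / (16 * sin (h / 2) ^ 2 * (2 * cos (h / 2) + cos (3 * h / 2)))) -
        -(3 * cos (h / 2) ^ 2) / (2 * sin (h / 2) ^ 2 * (1 + 2 * cos h)) := by
  have hs := sin_half_pos_of_lt_two_pi_div_three hh0 hh1
  have hc := one_half_lt_cos_half_of_lt_two_pi_div_three hh0 hh1
  have hD : 0 < 4 * cos (h / 2) ^ 2 - 1 := by nlinarith
  rw [correction_sub_eq hs.ne' (by positivity)]
  have : 0 < 2 * cos (h / 2) - 1 := by linarith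
  positivity

end StencilCoefficients

theorem stmt_18_general (h k α β θ : ℝ) (hh0 : 0 < h) (hh1 : h < 2 * Real.pi / 3)
    (a1 a2 a5 a6 w1 w2 : ℝ)
    (ha1 : a1 = Real.sin (h / 2) ^ 2 / (Real.sin h * Real.sin (3 * h / 2)))
    (ha2 : a2 = 2 / (1 + 2 * Real.cos h))
    (ha5 : a5 = 3 * (1 + 3 * Real.cos h) /
      (16 * Real.sin (h / 2) ^ 2 * (2 * Real.cos (h / 2) + Real.cos (3 * h / 2))))
    (ha6 : a6 = -(3 * Real.cos (h / 2) ^ 2) / (2 * Real.sin (h / 2) ^ 2 * (1 + 2 * Real.cos h)))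
    (hw1 : w1 = (1 + 2 * α * k + k ^ 2 * θ * β ^ 2) * a1 - k ^ 2 * θ * a5)
    (hw2 : w2 = (1 + 2 * α * k + k ^ 2 * θ * β ^ 2) * a2 - k ^ 2 * θ * a6)
    (hk : 0 ≤ k) (hα : 0 ≤ α) (hθ : 0 ≤ θ)
    : 0 ≤ (w2 - 2 * w1) - (a2 - 2 * a1) := by
  have hA : 0 ≤ a2 - 2 * a1 := by
    rw [ha1, ha2]
    exact stencil_sub_nonneg hh0 hh1
  have hB : 0 ≤ 2 * a5 - a6 := by
    rw [ha5, ha6]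
    exact correction_sub_nonneg hh0 hh1
  have key : (w2 - 2 * w1) - (a2 - 2 * a1) =
      (2 * α * k + k ^ 2 * θ * β ^ 2) * (a2 - 2 * a1) + k ^ 2 * θ * (2 * a5 - a6) := by
    rw [hw1, hw2]
    ring
  rw [key]
  positivity

theorem stmt_18 (h k α β θ : ℝ) (hh0 : 0 < h) (hh1 : h < 2 * Real.pi / 3)
    (a1 a2 a5 a6 w1 w2 w3 w4 : ℝ)
    (ha1 : a1 = Real.sin (h / 2) ^ 2 / (Real.sin h * Real.sin (3 * h / 2)))
    (ha2 : a2 = 2 / (1 + 2 * Real.cos h))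
    (ha5 : a5 = 3 * (1 + 3 * Real.cos h) /
      (16 * Real.sin (h / 2) ^ 2 * (2 * Real.cos (h / 2) + Real.cos (3 * h / 2))))
    (ha6 : a6 = -(3 * Real.cos (h / 2) ^ 2) / (2 * Real.sin (h / 2) ^ 2 * (1 + 2 * Real.cos h)))
    (hw1 : w1 = (1 + 2 * α * k + k ^ 2 * θ * β ^ 2) * a1 - k ^ 2 * θ * a5)
    (hw2 : w2 = (1 + 2 * α * k + k ^ 2 * θ * β ^ 2) * a2 - k ^ 2 * θ * a6)
    (hw3 : w3 = (2 + 2 * α * k - (1 - θ) * k ^ 2 * β ^ 2) * a1 + (1 - θ) * k ^ 2 * a5)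
    (hw4 : w4 = (2 + 2 * α * k - (1 - θ) * k ^ 2 * β ^ 2) * a2 + (1 - θ) * k ^ 2 * a6)
    (hk : 0 ≤ k) (hα : 0 ≤ α) (hθ : 0 ≤ θ)
    : 0 ≤ (w2 - 2 * w1) - (a2 - 2 * a1) :=
  stmt_18_general h k α β θ hh0 hh1 a1 a2 a5 a6 w1 w2 ha1 ha2 ha5 ha6 hw1 hw2 hk hα hθ
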